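/- Let n, d1, d2 ≥ 1 and T = d1 + d2 − 1. Let R_Ω be a linear operator on the space of T-tuples of real n×n matrices of the form R_Ω(L) = Σ_{(i,j,t)∈Ω} w_{i,j,t}·⟨E_{i,j,t}, L⟩_F·E_{i,j,t} with weights w_{i,j,t} > 0 for a subset Ω ⊆ [n]×[n]×[T]. Let H ∈ ℝ^{d1·n × d2·n} have rank r, let T_H be the tangent space to the rank-r matrix manifold at H, and suppose ‖P_{T_H} G R_Ω G* P_{T_H} − P_{T_H} G G* P_{T_H}‖ ≤ 2/5 (operator norm with respect to Frobenius norms). Then for every tuple η with R_Ω(η) = 0, ‖H(η)‖_F² ≤ (5/3)·(‖R_Ω‖ + 8/5)·‖P_{T_H^⊥} H(η)‖_F², where P_{T_H^⊥} = Id − P_{T_H} is the projection onto the orthogonal complement of T_H. -/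

import Mathlib

noncomputable section

open Matrix

def blockHankel (n d1 d2 T : ℕ) (X : Fin T → Matrix (Fin n) (Fin n) ℝ) :
    Matrix (Fin d1 × Fin n) (Fin d2 × Fin n) ℝ :=
  Matrix.of fun p q =>
    if h : p.1.val + q.1.val < T then X ⟨p.1.val + q.1.val, h⟩ p.2 q.2 else 0

def QT (n T : ℕ) (A : Matrix (Fin n) (Fin n) ℝ) : Fin T → Matrix (Fin n) (Fin n) ℝ :=
  fun t => A ^ (t.val + 1)

def frobNorm {α β : Type*} [Fintype α] [Fintype β] (M : Matrix α β ℝ) : ℝ :=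
  Real.sqrt (∑ i, ∑ j, (M i j) ^ 2)

def frobInner {α β : Type*} [Fintype α] [Fintype β] (M N : Matrix α β ℝ) : ℝ :=
  ∑ i, ∑ j, M i j * N i j

def tupNorm {n T : ℕ} (X : Fin T → Matrix (Fin n) (Fin n) ℝ) : ℝ :=
  Real.sqrt (∑ t, ∑ i, ∑ j, (X t i j) ^ 2)

def Etuple (n T : ℕ) (i j : Fin n) (t : Fin T) : Fin T → Matrix (Fin n) (Fin n) ℝ :=
  fun s => if s = t then Matrix.single i j 1 else 0

def Bmat (n d1 d2 T : ℕ) (i j : Fin n) (t : Fin T) :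
    Matrix (Fin d1 × Fin n) (Fin d2 × Fin n) ℝ :=
  (frobNorm (blockHankel n d1 d2 T (Etuple n T i j t)))⁻¹ •
    blockHankel n d1 d2 T (Etuple n T i j t)

/-- The normalized block Hankel operator `G`. -/
def Gop (n d1 d2 T : ℕ) (X : Fin T → Matrix (Fin n) (Fin n) ℝ) :
    Matrix (Fin d1 × Fin n) (Fin d2 × Fin n) ℝ :=
  ∑ t : Fin T, ∑ i : Fin n, ∑ j : Fin n, X t i j • Bmat n d1 d2 T i j t

/-- The adjoint `G*` of the normalized block Hankel operator. -/
def Gstar (n d1 d2 T : ℕ) (M : Matrix (Fin d1 × Fin n) (Fin d2 × Fin n) ℝ) :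
    Fin T → Matrix (Fin n) (Fin n) ℝ :=
  fun t => Matrix.of fun i j => frobInner (Bmat n d1 d2 T i j t) M

def tanProj {α β : Type*} [Fintype α] [Fintype β] {r : ℕ}
    (U : Matrix α (Fin r) ℝ) (V : Matrix β (Fin r) ℝ) (M : Matrix α β ℝ) : Matrix α β ℝ :=
  U * Uᵀ * M + M * (V * Vᵀ) - U * Uᵀ * M * (V * Vᵀ)

/-- Operator norm (w.r.t. Frobenius norms) of a map on matrices. -/
def opNormM {α β : Type*} [Fintype α] [Fintype β]
    (L : Matrix α β ℝ → Matrix α β ℝ) : ℝ :=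
  sInf {c : ℝ | 0 ≤ c ∧ ∀ M, frobNorm (L M) ≤ c * frobNorm M}

/-- Operator norm (w.r.t. Frobenius norms) of a map on matrix tuples. -/
def opNormT {n T : ℕ}
    (L : (Fin T → Matrix (Fin n) (Fin n) ℝ) → (Fin T → Matrix (Fin n) (Fin n) ℝ)) : ℝ :=
  sInf {c : ℝ | 0 ≤ c ∧ ∀ X, tupNorm (L X) ≤ c * tupNorm X}

/-- The sampling operator `R_Ω(L) = Σ_{(i,j,t)∈Ω} w_{i,j,t}·⟨E_{i,j,t}, L⟩_F·E_{i,j,t}`. -/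
def ROp (n T : ℕ) (Ω : Finset (Fin n × Fin n × Fin T)) (w : Fin n × Fin n × Fin T → ℝ)
    (L : Fin T → Matrix (Fin n) (Fin n) ℝ) : Fin T → Matrix (Fin n) (Fin n) ℝ :=
  fun t => Matrix.of fun i j => if (i, j, t) ∈ Ω then w (i, j, t) * L t i j else 0

/-- The `k`-th largest singular value (1-based) of a real matrix. -/
def singVal {α β : Type*} [Fintype α] [Fintype β] [DecidableEq β]
    (M : Matrix α β ℝ) (k : ℕ) : ℝ :=
  (((Multiset.map
      (fun j => Real.sqrt ((show (Mᵀ * M).IsHermitian by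
        simpa using Matrix.isHermitian_conjTranspose_mul_self M).eigenvalues j))
      Finset.univ.val).sort (· ≤ ·)).reverse).getD (k - 1) 0

/-- The spectral norm of a real matrix (its largest singular value). -/
def specNorm {α β : Type*} [Fintype α] [Fintype β] [DecidableEq β]
    (M : Matrix α β ℝ) : ℝ := singVal M 1

/-!
Write `H(η) = G η̃`, where `η̃` rescales each entry `η_{i,j,t}` by `‖H(E_{i,j,t})‖_F`; then
`R_Ω η̃ = 0` and `G* G η̃ = η̃`. Split `Z = H(η)` as `Z₁ + Z₂` with `Z₁ = P_{T_H} Z`, and put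
`X_k = G* Z_k`, so that `η̃ = X₁ + X₂`. Testing the local RIP against `Z₁` gives
`‖X₁‖² - ⟨R_Ω X₁, X₁⟩ ≤ (2/5)‖Z₁‖²`. Because `η̃ ∈ ker R_Ω` and `R_Ω` is self-adjoint,
`⟨R_Ω X₁, X₁⟩ = ⟨R_Ω X₂, X₂⟩ ≤ ‖R_Ω‖‖Z₂‖²`, while `‖X₁‖² ≥ ‖Z‖² - 2‖Z₂‖²` since `G` is an
isometry on `η̃` and `G*` a contraction. Pythagoras, `‖Z‖² = ‖Z₁‖² + ‖Z₂‖²`, combines the three.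
-/

open scoped RealInnerProductSpace

section InnerProductSpace

variable {E F : Type*} [NormedAddCommGroup E] [InnerProductSpace ℝ E]
  [NormedAddCommGroup F] [InnerProductSpace ℝ F]

theorem LinearMap.IsSymmetric.inner_map_sub_self_eq_zero {P : E →ₗ[ℝ] E} (hP : P.IsSymmetric)
    (hPP : ∀ z, P (P z) = P z) (z : E) : ⟪P z, z - P z⟫ = 0 := by
  rw [inner_sub_right, hP z (P z), hPP, real_inner_comm, sub_self]

theorem LinearMap.IsSymmetric.norm_sq_eq_norm_map_sq_add {P : E →ₗ[ℝ] E} (hP : P.IsSymmetric)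
    (hPP : ∀ z, P (P z) = P z) (z : E) : ‖z‖ ^ 2 = ‖P z‖ ^ 2 + ‖z - P z‖ ^ 2 := by
  have h := norm_add_sq_real (P z) (z - P z)
  rwa [add_sub_cancel, hP.inner_map_sub_self_eq_zero hPP, mul_zero, add_zero] at h

theorem norm_adjoint_apply_le {G : F →ₗ[ℝ] E} {G' : E →ₗ[ℝ] F}
    (hGG' : ∀ x z, ⟪G x, z⟫ = ⟪x, G' z⟫) (hG : ∀ x, ‖G x‖ ≤ ‖x‖) (z : E) :
    ‖G' z‖ ≤ ‖z‖ := by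
  have h : ‖G' z‖ ^ 2 ≤ ‖G' z‖ * ‖z‖ :=
    calc ‖G' z‖ ^ 2 = ⟪G (G' z), z⟫ := by rw [hGG', real_inner_self_eq_norm_sq]
      _ ≤ ‖G (G' z)‖ * ‖z‖ := real_inner_le_norm _ _
      _ ≤ ‖G' z‖ * ‖z‖ := by gcongr; exact hG _
  nlinarith [norm_nonneg (G' z), norm_nonneg z]

theorem nullspace_property_of_localRIP {G : F →ₗ[ℝ] E} {G' : E →ₗ[ℝ] F} {P : E →ₗ[ℝ] E}
    {R : F →ₗ[ℝ] F} {ρ δ : ℝ}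
    (hGG' : ∀ x z, ⟪G x, z⟫ = ⟪x, G' z⟫) (hG : ∀ x, ‖G x‖ ≤ ‖x‖)
    (hP : P.IsSymmetric) (hPP : ∀ z, P (P z) = P z)
    (hR : R.IsSymmetric) (hρ : ∀ x, ‖R x‖ ≤ ρ * ‖x‖) (hρ0 : 0 ≤ ρ)
    (hRIP : ∀ z, ‖P (G (R (G' (P z)))) - P (G (G' (P z)))‖ ≤ δ * ‖z‖)
    {x : F} (hx : G' (G x) = x) (hRx : R x = 0) :
    (1 - δ) * ‖G x‖ ^ 2 ≤ (ρ + 2 - δ) * ‖G x - P (G x)‖ ^ 2 := by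
  set Z := G x
  set Z₁ := P Z
  set Z₂ := Z - Z₁
  set X₁ := G' Z₁
  set X₂ := G' Z₂
  have hX₁ : X₁ = x - X₂ := by rw [← hx, eq_sub_iff_add_eq, ← map_add, add_sub_cancel]
  have hpyth : ‖Z₁‖ ^ 2 = ‖Z‖ ^ 2 - ‖Z₂‖ ^ 2 := by
    rw [hP.norm_sq_eq_norm_map_sq_add hPP Z]; ring
  have hform : ⟪X₁, X₁⟫ - ⟪R X₁, X₁⟫ ≤ δ * ‖Z₁‖ ^ 2 := by
    have hid : ⟪P (G (R (G' (P Z₁)))) - P (G (G' (P Z₁))), Z₁⟫ = ⟪R X₁, X₁⟫ - ⟪X₁, X₁⟫ := by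
      rw [inner_sub_left, hP, hP, hPP, hGG', hGG']
    have h := (abs_le.1 ((abs_real_inner_le_norm _ _).trans
      (mul_le_mul_of_nonneg_right (hRIP Z₁) (norm_nonneg Z₁)))).1
    rw [hid] at h
    linarith [sq ‖Z₁‖]
  have hRX₁ : ⟪R X₁, X₁⟫ = ⟪R X₂, X₂⟫ := by
    rw [hX₁, map_sub, hRx, zero_sub, inner_neg_left, inner_sub_right, hR, hRx, inner_zero_right]
    ring
  have hRX₂ : ⟪R X₂, X₂⟫ ≤ ρ * ‖Z₂‖ ^ 2 :=
    calc ⟪R X₂, X₂⟫ ≤ ‖R X₂‖ * ‖X₂‖ := real_inner_le_norm _ _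
      _ ≤ ρ * ‖X₂‖ * ‖X₂‖ := by gcongr; exact hρ _
      _ ≤ ρ * ‖Z₂‖ * ‖Z₂‖ := by
        have := norm_adjoint_apply_le hGG' hG Z₂
        gcongr
      _ = ρ * ‖Z₂‖ ^ 2 := by ring
  have hnormX₁ : ‖Z‖ ^ 2 - 2 * ‖Z₂‖ ^ 2 ≤ ⟪X₁, X₁⟫ := by
    have hxx : ⟪x, x⟫ = ‖Z‖ ^ 2 := by
      rw [← real_inner_self_eq_norm_sq, hGG', hx]
    have hxX₂ : ⟪x, X₂⟫ = ‖Z₂‖ ^ 2 := by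
      rw [← hGG', ← real_inner_self_eq_norm_sq, ← sub_eq_zero, ← inner_sub_left, sub_sub_cancel]
      exact hP.inner_map_sub_self_eq_zero hPP Z
    rw [hX₁, inner_sub_left, inner_sub_right, inner_sub_right, real_inner_comm x X₂, hxx, hxX₂]
    linarith [real_inner_self_nonneg (x := X₂)]
  rw [hpyth] at hform
  linarith

end InnerProductSpace

theorem sInf_bound_eq_opNorm {V E : Type*} [NormedAddCommGroup E] [NormedSpace ℝ E]
    [FiniteDimensional ℝ E] {e : V → E} (he : e.Surjective) {L : V → V} {L' : E →ₗ[ℝ] E}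
    (hL : ∀ v, e (L v) = L' (e v)) :
    sInf {c : ℝ | 0 ≤ c ∧ ∀ v, ‖e (L v)‖ ≤ c * ‖e v‖} = ‖LinearMap.toContinuousLinearMap L'‖ := by
  simp only [ContinuousLinearMap.norm_def, hL, he.forall, LinearMap.coe_toContinuousLinearMap']

section Coordinates

variable {α β : Type*}

def frobVec : Matrix α β ℝ ≃ₗ[ℝ] EuclideanSpace ℝ (α × β) where
  toFun M := WithLp.toLp 2 fun p => M p.1 p.2
  invFun x := Matrix.of fun i j => x (i, j)
  map_add' _ _ := rfl
  map_smul' _ _ := rfl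
  left_inv _ := rfl
  right_inv _ := rfl

@[simp]
theorem frobVec_apply (M : Matrix α β ℝ) (p : α × β) : frobVec M p = M p.1 p.2 := rfl

variable [Fintype α] [Fintype β]

theorem frobNorm_eq_norm (M : Matrix α β ℝ) : frobNorm M = ‖frobVec M‖ := by
  simp [frobNorm, EuclideanSpace.norm_eq, Fintype.sum_prod_type]

theorem frobInner_eq_inner (M N : Matrix α β ℝ) : frobInner M N = ⟪frobVec M, frobVec N⟫ := by
  simp [frobInner, PiLp.inner_apply, Fintype.sum_prod_type, mul_comm]

theorem frobNorm_sq (M : Matrix α β ℝ) : frobNorm M ^ 2 = frobInner M M := by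
  rw [frobNorm_eq_norm, frobInner_eq_inner, real_inner_self_eq_norm_sq]

theorem frobInner_eq_trace (M N : Matrix α β ℝ) : frobInner M N = (Mᵀ * N).trace := by
  simp only [frobInner, Matrix.trace, Matrix.diag, Matrix.mul_apply, Matrix.transpose_apply]
  exact Finset.sum_comm

theorem opNormM_eq {L : Matrix α β ℝ → Matrix α β ℝ}
    {L' : EuclideanSpace ℝ (α × β) →ₗ[ℝ] EuclideanSpace ℝ (α × β)}
    (hL : ∀ M, frobVec (L M) = L' (frobVec M)) :
    opNormM L = ‖LinearMap.toContinuousLinearMap L'‖ := by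
  simp only [opNormM, frobNorm_eq_norm]
  exact sInf_bound_eq_opNorm frobVec.surjective hL

variable {n T : ℕ}

def tupVec :
    (Fin T → Matrix (Fin n) (Fin n) ℝ) ≃ₗ[ℝ] EuclideanSpace ℝ (Fin T × Fin n × Fin n) where
  toFun X := WithLp.toLp 2 fun p => X p.1 p.2.1 p.2.2
  invFun x t := Matrix.of fun i j => x (t, i, j)
  map_add' _ _ := rfl
  map_smul' _ _ := rfl
  left_inv _ := rfl
  right_inv _ := rfl

@[simp]
theorem tupVec_apply (X : Fin T → Matrix (Fin n) (Fin n) ℝ) (p : Fin T × Fin n × Fin n) :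
    tupVec X p = X p.1 p.2.1 p.2.2 := rfl

theorem tupNorm_eq_norm (X : Fin T → Matrix (Fin n) (Fin n) ℝ) : tupNorm X = ‖tupVec X‖ := by
  simp [tupNorm, EuclideanSpace.norm_eq, Fintype.sum_prod_type]

theorem inner_tupVec (X Y : Fin T → Matrix (Fin n) (Fin n) ℝ) :
    ⟪tupVec X, tupVec Y⟫ = ∑ t, ∑ i, ∑ j, X t i j * Y t i j := by
  simp [PiLp.inner_apply, Fintype.sum_prod_type, mul_comm]

theorem opNormT_eq {L : (Fin T → Matrix (Fin n) (Fin n) ℝ) → (Fin T → Matrix (Fin n) (Fin n) ℝ)}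
    {L' : EuclideanSpace ℝ (Fin T × Fin n × Fin n) →ₗ[ℝ] EuclideanSpace ℝ (Fin T × Fin n × Fin n)}
    (hL : ∀ X, tupVec (L X) = L' (tupVec X)) :
    opNormT L = ‖LinearMap.toContinuousLinearMap L'‖ := by
  simp only [opNormT, tupNorm_eq_norm]
  exact sInf_bound_eq_opNorm tupVec.surjective hL

end Coordinates

section TangentSpace

variable {α β : Type*} [Fintype α] [Fintype β] {r : ℕ} (U : Matrix α (Fin r) ℝ)
  (V : Matrix β (Fin r) ℝ)

theorem frobInner_tanProj_left (M N : Matrix α β ℝ) :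
    frobInner (tanProj U V M) N = frobInner M (tanProj U V N) := by
  simp only [frobInner_eq_trace, tanProj, Matrix.transpose_sub, Matrix.transpose_add,
    Matrix.transpose_mul, Matrix.transpose_transpose, Matrix.mul_add, Matrix.add_mul,
    Matrix.mul_sub, Matrix.sub_mul, Matrix.trace_add, Matrix.trace_sub, Matrix.mul_assoc]
  rw [← Matrix.mul_assoc V Vᵀ (Mᵀ * N), Matrix.trace_mul_comm (V * Vᵀ),
    ← Matrix.mul_assoc V Vᵀ, Matrix.trace_mul_comm (V * Vᵀ)]
  simp only [Matrix.mul_assoc]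

variable {U V} in
theorem tanProj_tanProj (hU : Uᵀ * U = 1) (hV : Vᵀ * V = 1) (M : Matrix α β ℝ) :
    tanProj U V (tanProj U V M) = tanProj U V M := by
  have hUUU : U * Uᵀ * U = U := by rw [Matrix.mul_assoc, hU, Matrix.mul_one]
  have hVVV : ∀ X : Matrix α (Fin r) ℝ, X * Vᵀ * V = X := fun X => by
    rw [Matrix.mul_assoc, hV, Matrix.mul_one]
  simp only [tanProj, Matrix.mul_add, Matrix.add_mul, Matrix.mul_sub, Matrix.sub_mul,
    ← Matrix.mul_assoc, hUUU, hVVV]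
  abel

end TangentSpace

section Hankel

variable {n d1 d2 T : ℕ}

theorem blockHankel_Etuple_apply (i j : Fin n) (t : Fin T) (a : Fin d1) (x : Fin n) (b : Fin d2)
    (y : Fin n) :
    blockHankel n d1 d2 T (Etuple n T i j t) (a, x) (b, y)
      = if a.val + b.val = t.val ∧ i = x ∧ j = y then 1 else 0 := by
  simp only [blockHankel, Matrix.of_apply, Etuple]
  split_ifs <;> simp_all [Matrix.single, Fin.ext_iff]

theorem frobInner_blockHankel_Etuple_of_ne {i j k l : Fin n} {t s : Fin T}
    (h : (i, j, t) ≠ (k, l, s)) :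
    frobInner (blockHankel n d1 d2 T (Etuple n T i j t)) (blockHankel n d1 d2 T (Etuple n T k l s))
      = 0 := by
  simp only [frobInner, Fintype.sum_prod_type, blockHankel_Etuple_apply]
  refine Finset.sum_eq_zero fun a _ => Finset.sum_eq_zero fun x _ =>
    Finset.sum_eq_zero fun b _ => Finset.sum_eq_zero fun y _ => ?_
  split_ifs with h₁ h₂ <;> try simp
  obtain ⟨hab, rfl, rfl⟩ := h₁
  obtain ⟨hab', rfl, rfl⟩ := h₂
  exact h (by simp [Fin.ext_iff]; omega)

-- `H(E_{i,j,t}) = 0` when `t ≥ d1 + d2 - 1`, and then `B_{i,j,t} = 0` because `0⁻¹ = 0`.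
theorem frobInner_Bmat (i j k l : Fin n) (t s : Fin T) :
    frobInner (Bmat n d1 d2 T i j t) (Bmat n d1 d2 T k l s)
      = if (i, j, t) = (k, l, s) ∧ frobNorm (blockHankel n d1 d2 T (Etuple n T i j t)) ≠ 0
        then 1 else 0 := by
  have hsmul : ∀ (a b : ℝ) (M N : Matrix (Fin d1 × Fin n) (Fin d2 × Fin n) ℝ),
      frobInner (a • M) (b • N) = a * b * frobInner M N := by
    intro a b M N
    simp only [frobInner_eq_inner, map_smul, real_inner_smul_left, real_inner_smul_right]
    ring
  rw [Bmat, Bmat, hsmul]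
  by_cases h : (i, j, t) = (k, l, s)
  · simp only [Prod.mk.injEq] at h
    obtain ⟨rfl, rfl, rfl⟩ := h
    rw [← frobNorm_sq]
    by_cases hc : frobNorm (blockHankel n d1 d2 T (Etuple n T i j t)) = 0
    · simp [hc]
    · simp [hc]
      field_simp
  · rw [frobInner_blockHankel_Etuple_of_ne h, if_neg (fun h' => h h'.1), mul_zero]

theorem Gstar_Gop_apply (X : Fin T → Matrix (Fin n) (Fin n) ℝ) (t : Fin T) (i j : Fin n) :
    Gstar n d1 d2 T (Gop n d1 d2 T X) t i j
      = if frobNorm (blockHankel n d1 d2 T (Etuple n T i j t)) = 0 then 0 else X t i j := by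
  have h : frobInner (Bmat n d1 d2 T i j t) (Gop n d1 d2 T X)
      = ∑ s, ∑ k, ∑ l, X s k l * frobInner (Bmat n d1 d2 T i j t) (Bmat n d1 d2 T k l s) := by
    simp only [Gop, frobInner_eq_inner, map_sum, map_smul, inner_sum, real_inner_smul_right]
  simp only [Gstar, Matrix.of_apply, h, frobInner_Bmat, Prod.mk.injEq]
  by_cases hc : frobNorm (blockHankel n d1 d2 T (Etuple n T i j t)) = 0
  · simp [hc]
  · simp [hc, ite_and, Finset.sum_ite_eq]

theorem inner_Gop (X : Fin T → Matrix (Fin n) (Fin n) ℝ)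
    (M : Matrix (Fin d1 × Fin n) (Fin d2 × Fin n) ℝ) :
    ⟪frobVec (Gop n d1 d2 T X), frobVec M⟫ = ⟪tupVec X, tupVec (Gstar n d1 d2 T M)⟫ := by
  simp [inner_tupVec, Gop, Gstar, frobInner_eq_inner, sum_inner, real_inner_smul_left]

theorem norm_Gop_le (X : Fin T → Matrix (Fin n) (Fin n) ℝ) :
    ‖frobVec (Gop n d1 d2 T X)‖ ≤ ‖tupVec X‖ := by
  rw [← pow_le_pow_iff_left₀ (norm_nonneg _) (norm_nonneg _) two_ne_zero,
    ← real_inner_self_eq_norm_sq, ← real_inner_self_eq_norm_sq, inner_Gop, inner_tupVec,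
    inner_tupVec]
  refine Finset.sum_le_sum fun t _ => Finset.sum_le_sum fun i _ =>
    Finset.sum_le_sum fun j _ => ?_
  rw [Gstar_Gop_apply]
  split_ifs
  · simpa using mul_self_nonneg (X t i j)
  · rfl

def hankelWeight (n d1 d2 T : ℕ) (η : Fin T → Matrix (Fin n) (Fin n) ℝ) :
    Fin T → Matrix (Fin n) (Fin n) ℝ :=
  fun t => Matrix.of fun i j => frobNorm (blockHankel n d1 d2 T (Etuple n T i j t)) * η t i j

theorem Gstar_Gop_hankelWeight (η : Fin T → Matrix (Fin n) (Fin n) ℝ) :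
    Gstar n d1 d2 T (Gop n d1 d2 T (hankelWeight n d1 d2 T η)) = hankelWeight n d1 d2 T η := by
  ext t i j
  rw [Gstar_Gop_apply]
  split_ifs with hc
  · simp [hankelWeight, hc]
  · rfl

def blockHankelₗ (n d1 d2 T : ℕ) :
    (Fin T → Matrix (Fin n) (Fin n) ℝ) →ₗ[ℝ] Matrix (Fin d1 × Fin n) (Fin d2 × Fin n) ℝ where
  toFun := blockHankel n d1 d2 T
  map_add' X Y := by
    ext; simp only [blockHankel, Matrix.of_apply, Matrix.add_apply]; split_ifs <;> simp
  map_smul' c X := by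
    ext; simp only [blockHankel, Matrix.of_apply, Matrix.smul_apply]; split_ifs <;> simp

theorem sum_smul_Etuple (X : Fin T → Matrix (Fin n) (Fin n) ℝ) :
    ∑ t, ∑ i, ∑ j, X t i j • Etuple n T i j t = X := by
  funext s
  simp [Etuple, Finset.sum_apply, ← Matrix.matrix_eq_sum_single]

theorem Gop_hankelWeight (η : Fin T → Matrix (Fin n) (Fin n) ℝ) :
    Gop n d1 d2 T (hankelWeight n d1 d2 T η) = blockHankel n d1 d2 T η := by
  have h : ∀ t i j, hankelWeight n d1 d2 T η t i j • Bmat n d1 d2 T i j t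
      = η t i j • blockHankel n d1 d2 T (Etuple n T i j t) := by
    intro t i j
    by_cases hc : frobNorm (blockHankel n d1 d2 T (Etuple n T i j t)) = 0
    · rw [frobNorm_eq_norm, norm_eq_zero, LinearEquiv.map_eq_zero_iff] at hc
      simp [Bmat, hc]
    · simp only [hankelWeight, Matrix.of_apply, Bmat, smul_smul]
      field_simp
  calc Gop n d1 d2 T (hankelWeight n d1 d2 T η)
      = blockHankelₗ n d1 d2 T (∑ t, ∑ i, ∑ j, η t i j • Etuple n T i j t) := by
        simp only [Gop, h, map_sum, map_smul]; rfl
    _ = blockHankel n d1 d2 T η := by rw [sum_smul_Etuple]; rfl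

end Hankel

section Sampling

variable {n T : ℕ} (Ω : Finset (Fin n × Fin n × Fin T)) (w : Fin n × Fin n × Fin T → ℝ)

theorem inner_ROp (X Y : Fin T → Matrix (Fin n) (Fin n) ℝ) :
    ⟪tupVec (ROp n T Ω w X), tupVec Y⟫ = ⟪tupVec X, tupVec (ROp n T Ω w Y)⟫ := by
  simp only [inner_tupVec, ROp, Matrix.of_apply]
  refine Finset.sum_congr rfl fun t _ => Finset.sum_congr rfl fun i _ =>
    Finset.sum_congr rfl fun j _ => ?_
  split_ifs <;> ring

variable {Ω w} in
theorem ROp_hankelWeight_eq_zero {d1 d2 : ℕ} {η : Fin T → Matrix (Fin n) (Fin n) ℝ}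
    (hη : ROp n T Ω w η = 0) : ROp n T Ω w (hankelWeight n d1 d2 T η) = 0 := by
  ext t i j
  have h := congrFun (congrFun (congrFun hη t) i) j
  simp only [ROp, hankelWeight, Matrix.of_apply, Pi.zero_apply, Matrix.zero_apply] at h ⊢
  split_ifs at h ⊢
  · rw [mul_left_comm, h, mul_zero]
  · rfl

end Sampling

section EuclideanOperators

variable {n d1 d2 T : ℕ}

def euclideanGop (n d1 d2 T : ℕ) : EuclideanSpace ℝ (Fin T × Fin n × Fin n) →ₗ[ℝ]
    EuclideanSpace ℝ ((Fin d1 × Fin n) × (Fin d2 × Fin n)) :=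
  tupVec.arrowCongr frobVec
    { toFun := Gop n d1 d2 T
      map_add' := fun X Y => by
        simp only [Gop, Pi.add_apply, Matrix.add_apply, add_smul, Finset.sum_add_distrib]
      map_smul' := fun c X => by
        simp only [Gop, Pi.smul_apply, Matrix.smul_apply, smul_eq_mul, Finset.smul_sum,
          smul_smul, RingHom.id_apply] }

def euclideanGstar (n d1 d2 T : ℕ) : EuclideanSpace ℝ ((Fin d1 × Fin n) × (Fin d2 × Fin n))
    →ₗ[ℝ] EuclideanSpace ℝ (Fin T × Fin n × Fin n) :=
  frobVec.arrowCongr tupVec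
    { toFun := Gstar n d1 d2 T
      map_add' := fun M N => by ext; simp [Gstar, frobInner_eq_inner, inner_add_right]
      map_smul' := fun c M => by ext; simp [Gstar, frobInner_eq_inner, real_inner_smul_right] }

def euclideanTanProj {α β : Type*} [Fintype α] [Fintype β] {r : ℕ} (U : Matrix α (Fin r) ℝ)
    (V : Matrix β (Fin r) ℝ) : EuclideanSpace ℝ (α × β) →ₗ[ℝ] EuclideanSpace ℝ (α × β) :=
  frobVec.conj
    { toFun := tanProj U V
      map_add' := fun M N => by simp only [tanProj, Matrix.mul_add, Matrix.add_mul]; abel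
      map_smul' := fun c M => by
        simp only [tanProj, Matrix.mul_smul, Matrix.smul_mul, smul_sub, smul_add,
          RingHom.id_apply] }

def euclideanROp (Ω : Finset (Fin n × Fin n × Fin T)) (w : Fin n × Fin n × Fin T → ℝ) :
    EuclideanSpace ℝ (Fin T × Fin n × Fin n) →ₗ[ℝ] EuclideanSpace ℝ (Fin T × Fin n × Fin n) :=
  tupVec.conj
    { toFun := ROp n T Ω w
      map_add' := fun X Y => by
        ext; simp only [ROp, Matrix.of_apply, Pi.add_apply, Matrix.add_apply]; split_ifs <;> ring
      map_smul' := fun c X => by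
        ext; simp only [ROp, Matrix.of_apply, Pi.smul_apply, Matrix.smul_apply]
        split_ifs <;> simp; ring }

@[simp]
theorem euclideanGop_tupVec (X : Fin T → Matrix (Fin n) (Fin n) ℝ) :
    euclideanGop n d1 d2 T (tupVec X) = frobVec (Gop n d1 d2 T X) := rfl

@[simp]
theorem euclideanGstar_frobVec (M : Matrix (Fin d1 × Fin n) (Fin d2 × Fin n) ℝ) :
    euclideanGstar n d1 d2 T (frobVec M) = tupVec (Gstar n d1 d2 T M) := rfl

@[simp]
theorem euclideanTanProj_frobVec {α β : Type*} [Fintype α] [Fintype β] {r : ℕ}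
    (U : Matrix α (Fin r) ℝ) (V : Matrix β (Fin r) ℝ) (M : Matrix α β ℝ) :
    euclideanTanProj U V (frobVec M) = frobVec (tanProj U V M) := rfl

@[simp]
theorem euclideanROp_tupVec (Ω : Finset (Fin n × Fin n × Fin T)) (w : Fin n × Fin n × Fin T → ℝ)
    (X : Fin T → Matrix (Fin n) (Fin n) ℝ) :
    euclideanROp Ω w (tupVec X) = tupVec (ROp n T Ω w X) := rfl

end EuclideanOperators

theorem localRIP_nullspace_property_general (n d1 d2 T r : ℕ)
    (Ω : Finset (Fin n × Fin n × Fin T)) (w : Fin n × Fin n × Fin T → ℝ)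
    (U1 : Matrix (Fin d1 × Fin n) (Fin r) ℝ) (V1 : Matrix (Fin d2 × Fin n) (Fin r) ℝ)
    (hU1 : U1ᵀ * U1 = 1) (hV1 : V1ᵀ * V1 = 1)
    (hRIP : opNormM (fun M =>
        tanProj U1 V1 (Gop n d1 d2 T (ROp n T Ω w (Gstar n d1 d2 T (tanProj U1 V1 M))))
          - tanProj U1 V1 (Gop n d1 d2 T (Gstar n d1 d2 T (tanProj U1 V1 M)))) ≤ 2 / 5) :
    ∀ η : Fin T → Matrix (Fin n) (Fin n) ℝ, ROp n T Ω w η = 0 →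
      frobNorm (blockHankel n d1 d2 T η) ^ 2
        ≤ (5 / 3) * (opNormT (ROp n T Ω w) + 8 / 5)
          * frobNorm (blockHankel n d1 d2 T η
              - tanProj U1 V1 (blockHankel n d1 d2 T η)) ^ 2 := by
  intro η hη
  set G := euclideanGop n d1 d2 T
  set G' := euclideanGstar n d1 d2 T
  set P := euclideanTanProj U1 V1
  set R := euclideanROp Ω w
  rw [opNormM_eq (L' := P ∘ₗ G ∘ₗ R ∘ₗ G' ∘ₗ P - P ∘ₗ G ∘ₗ G' ∘ₗ P)
    fun M => by simp [G, G', P, R]] at hRIP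
  have key := nullspace_property_of_localRIP (G := G) (G' := G') (P := P) (R := R)
    (x := tupVec (hankelWeight n d1 d2 T η))
    (by simpa [G, G', tupVec.surjective.forall, frobVec.surjective.forall] using inner_Gop)
    (by simpa [G, tupVec.surjective.forall] using norm_Gop_le)
    (by simpa [P, LinearMap.IsSymmetric, frobVec.surjective.forall, ← frobInner_eq_inner]
      using frobInner_tanProj_left U1 V1)
    (by simpa [P, frobVec.surjective.forall] using tanProj_tanProj hU1 hV1)
    (by simpa [R, LinearMap.IsSymmetric, tupVec.surjective.forall] using inner_ROp Ω w)
    (LinearMap.toContinuousLinearMap R).le_opNorm (norm_nonneg _)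
    (fun z => by
      simpa using ((LinearMap.toContinuousLinearMap _).le_opNorm z).trans
        (mul_le_mul_of_nonneg_right hRIP (norm_nonneg z)))
    (by simp [G, G', Gstar_Gop_hankelWeight])
    (by simp [R, ROp_hankelWeight_eq_zero hη])
  simp only [G, P, euclideanGop_tupVec, Gop_hankelWeight, euclideanTanProj_frobVec,
    ← map_sub] at key
  rw [frobNorm_eq_norm, frobNorm_eq_norm,
    opNormT_eq (L := ROp n T Ω w) (L' := R) fun _ => rfl]
  linarith

/-- Null-space property from the local restricted isometry property: if `H` has rank `r`
with tangent space `T_H` and `‖P_{T_H} G R_Ω G* P_{T_H} − P_{T_H} G G* P_{T_H}‖ ≤ 2/5`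
then every `η` in the kernel of the sampling operator `R_Ω` satisfies
`‖H(η)‖_F² ≤ (5/3)(‖R_Ω‖ + 8/5)‖P_{T_H^⊥} H(η)‖_F²`. -/
theorem localRIP_nullspace_property (n d1 d2 T r : ℕ)
    (hn : 1 ≤ n) (hd1 : 1 ≤ d1) (hd2 : 1 ≤ d2) (hT : T = d1 + d2 - 1)
    (Ω : Finset (Fin n × Fin n × Fin T)) (w : Fin n × Fin n × Fin T → ℝ)
    (hw : ∀ idx ∈ Ω, 0 < w idx)
    (H : Matrix (Fin d1 × Fin n) (Fin d2 × Fin n) ℝ) (hrH : H.rank = r)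
    (U1 : Matrix (Fin d1 × Fin n) (Fin r) ℝ) (V1 : Matrix (Fin d2 × Fin n) (Fin r) ℝ)
    (σ1 : Fin r → ℝ) (hσ1 : ∀ l, 0 < σ1 l)
    (hU1 : U1ᵀ * U1 = 1) (hV1 : V1ᵀ * V1 = 1)
    (hSVD1 : H = U1 * Matrix.diagonal σ1 * V1ᵀ)
    (hRIP : opNormM (fun M =>
        tanProj U1 V1 (Gop n d1 d2 T (ROp n T Ω w (Gstar n d1 d2 T (tanProj U1 V1 M))))
          - tanProj U1 V1 (Gop n d1 d2 T (Gstar n d1 d2 T (tanProj U1 V1 M)))) ≤ 2 / 5) :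
    ∀ η : Fin T → Matrix (Fin n) (Fin n) ℝ, ROp n T Ω w η = 0 →
      frobNorm (blockHankel n d1 d2 T η) ^ 2
        ≤ (5 / 3) * (opNormT (ROp n T Ω w) + 8 / 5)
          * frobNorm (blockHankel n d1 d2 T η
              - tanProj U1 V1 (blockHankel n d1 d2 T η)) ^ 2 :=
  localRIP_nullspace_property_general n d1 d2 T r Ω w U1 V1 hU1 hV1 hRIP
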